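/- Let α ≥ 0 be a real constant. For every function f : [0,1] → ℝ that is continuously differentiable on [0,1] and not identically zero, the Rayleigh quotient (α(f(0)² + f(1)²) + ∫₀¹ (f′(z))² dz) / (∫₀¹ f(z)² dz) is at least ((−α + √(α² + 8π²α)) / (4π))². -/

import Mathlib

open Real Set

/-!
Let `μ ∈ [0, π)` solve `μ tan (μ / 2) = α`, so that `μ²` is the Robin ground-state eigenvalue.
Then `r z = -μ tan (μ (z - 1/2))` solves the Riccati equation `r' = -μ² - r²` with `r 0 = α` and
`r 1 = -α`, and integrating `(f' - r f)² ≥ 0` gives `μ² ∫ f² ≤ α (f 0² + f 1²) + ∫ f'²`.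
The Jordan-type bound `(π - 2x) tan x ≤ π x` turns `μ tan (μ / 2) = α` into
`π α ≤ 2 π μ² + α μ`, which places the explicit constant, the nonnegative root of
`2 π m² + α m = π α`, below `μ`.
-/

theorem mul_integral_sq_le_of_riccati {a b Λ : ℝ} (hab : a ≤ b) {f f' r : ℝ → ℝ}
    (hf : ∀ z ∈ Icc a b, HasDerivWithinAt f (f' z) (Icc a b) z)
    (hf' : ContinuousOn f' (Icc a b))
    (hr : ∀ z ∈ Icc a b, HasDerivWithinAt r (-Λ - r z ^ 2) (Icc a b) z) :
    Λ * ∫ z in a..b, f z ^ 2 ≤ r a * f a ^ 2 - r b * f b ^ 2 + ∫ z in a..b, f' z ^ 2 := by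
  have hfc : ContinuousOn f (Icc a b) := fun z hz => (hf z hz).continuousWithinAt
  have hrc : ContinuousOn r (Icc a b) := fun z hz => (hr z hz).continuousWithinAt
  set P' : ℝ → ℝ := fun z => (-Λ - r z ^ 2) * f z ^ 2 + r z * (2 * f z * f' z)
  have hP' : ContinuousOn P' (Icc a b) :=
    ((continuousOn_const.sub (hrc.pow 2)).mul (hfc.pow 2)).add
      (hrc.mul ((continuousOn_const.mul hfc).mul hf'))
  have hderiv : ∀ z ∈ Icc a b, HasDerivWithinAt (fun z => r z * f z ^ 2) (P' z) (Icc a b) z := by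
    intro z hz
    refine ((hr z hz).mul ((hf z hz).pow 2)).congr_deriv ?_
    simp only [P', Pi.pow_apply]
    ring
  have hftc : ∫ z in a..b, P' z = r b * f b ^ 2 - r a * f a ^ 2 :=
    intervalIntegral.integral_eq_sub_of_hasDeriv_right_of_le hab (hrc.mul (hfc.pow 2))
      (fun z hz => ((hderiv z (Ioo_subset_Icc_self hz)).hasDerivAt
        (Icc_mem_nhds hz.1 hz.2)).hasDerivWithinAt)
      (hP'.intervalIntegrable_of_Icc hab)
  -- The Riccati equation for `r` makes `f'² - Λ f² - (r f²)'` the perfect square `(f' - r f)²`.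
  have hsq : 0 ≤ ∫ z in a..b, (f' z ^ 2 - Λ * f z ^ 2 - P' z) := by
    refine intervalIntegral.integral_nonneg hab fun z _ => ?_
    have : f' z ^ 2 - Λ * f z ^ 2 - P' z = (f' z - r z * f z) ^ 2 := by simp only [P']; ring
    exact this ▸ sq_nonneg _
  have hf'2 : IntervalIntegrable (fun z => f' z ^ 2) MeasureTheory.volume a b :=
    (hf'.pow 2).intervalIntegrable_of_Icc hab
  have hf2 : IntervalIntegrable (fun z => Λ * f z ^ 2) MeasureTheory.volume a b :=
    ((hfc.pow 2).intervalIntegrable_of_Icc hab).const_mul Λ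
  rw [intervalIntegral.integral_sub (hf'2.sub hf2) (hP'.intervalIntegrable_of_Icc hab),
    intervalIntegral.integral_sub hf'2 hf2, intervalIntegral.integral_const_mul, hftc] at hsq
  linarith

theorem hasDerivAt_neg_mul_tan_mul_sub {μ c z : ℝ} (h : cos (μ * (z - c)) ≠ 0) :
    HasDerivAt (fun z => -(μ * tan (μ * (z - c)))) (-μ ^ 2 - (-(μ * tan (μ * (z - c)))) ^ 2) z := by
  have hlin : HasDerivAt (fun z => μ * (z - c)) μ z := by
    simpa using ((hasDerivAt_id z).sub_const c).const_mul μ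
  refine (((hasDerivAt_tan h).comp z hlin).const_mul μ).neg.congr_deriv ?_
  rw [one_div, ← inv_one_add_tan_sq h, inv_inv]
  ring

theorem sub_two_mul_mul_tan_le {x : ℝ} (hx₀ : 0 ≤ x) (hx : x < π / 2) :
    (π - 2 * x) * tan x ≤ π * x := by
  have hcos : 0 < cos x := cos_pos_of_mem_Ioo ⟨by linarith [pi_pos], hx⟩
  have hsin : (π - 2 * x) * sin x ≤ (π - 2 * x) * x :=
    mul_le_mul_of_nonneg_left (sin_le hx₀) (by linarith)
  have hjordan : π - 2 * x ≤ π * cos x := by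
    have := mul_le_mul_of_nonneg_left (one_sub_mul_le_cos hx₀ hx.le) pi_pos.le
    rwa [mul_sub, mul_one, ← mul_assoc, mul_div_cancel₀ _ pi_ne_zero] at this
  rw [tan_eq_sin_div_cos, ← mul_div_assoc, div_le_iff₀ hcos]
  nlinarith

theorem exists_mul_tan_half_eq {α : ℝ} (hα : 0 ≤ α) : ∃ μ ∈ Ico 0 π, μ * tan (μ / 2) = α := by
  have hcont : ContinuousOn (fun μ => μ * sin (μ / 2) - α * cos (μ / 2)) (Icc 0 π) := by
    fun_prop
  obtain ⟨μ, ⟨hμ₀, hμπ⟩, hμ⟩ := intermediate_value_Icc pi_pos.le hcont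
    (show (0 : ℝ) ∈ Icc _ _ by simp [hα, pi_pos.le])
  simp only [sub_eq_zero] at hμ
  have hμπ : μ < π := hμπ.lt_of_ne fun h => by simp [h, pi_ne_zero] at hμ
  have hcos : 0 < cos (μ / 2) := cos_pos_of_mem_Ioo ⟨by linarith [pi_pos], by linarith⟩
  refine ⟨μ, ⟨hμ₀, hμπ⟩, ?_⟩
  rw [tan_eq_sin_div_cos, ← mul_div_assoc, hμ, mul_div_cancel_right₀ _ hcos.ne']

theorem sq_quadratic_root_le_sq {p α μ : ℝ} (hp : 0 < p) (hα : 0 ≤ α) (hμ : 0 ≤ μ)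
    (h : p * α ≤ 2 * p * μ ^ 2 + α * μ) :
    ((-α + √(α ^ 2 + 8 * p ^ 2 * α)) / (4 * p)) ^ 2 ≤ μ ^ 2 := by
  have hα_le : α ≤ √(α ^ 2 + 8 * p ^ 2 * α) :=
    le_sqrt_of_sq_le (by nlinarith [mul_nonneg (sq_nonneg p) hα])
  have hle : √(α ^ 2 + 8 * p ^ 2 * α) ≤ 4 * p * μ + α :=
    sqrt_le_iff.mpr ⟨by positivity, by nlinarith⟩
  apply pow_le_pow_left₀ (div_nonneg (by linarith) (by positivity))
  rw [div_le_iff₀ (by positivity)]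
  linarith

theorem sq_mul_integral_sq_le_of_mul_tan_half_eq {α μ : ℝ} (hμ : μ ∈ Ico 0 π) (hαμ : μ * tan (μ / 2) = α)
    {f f' : ℝ → ℝ} (hf : ∀ z ∈ Icc (0 : ℝ) 1, HasDerivWithinAt f (f' z) (Icc (0 : ℝ) 1) z)
    (hf' : ContinuousOn f' (Icc (0 : ℝ) 1)) :
    μ ^ 2 * ∫ z in (0 : ℝ)..1, f z ^ 2 ≤ α * (f 0 ^ 2 + f 1 ^ 2) + ∫ z in (0 : ℝ)..1, f' z ^ 2 := by
  have hcos : ∀ z ∈ Icc (0 : ℝ) 1, cos (μ * (z - 1 / 2)) ≠ 0 := fun z hz =>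
    (cos_pos_of_mem_Ioo ⟨by nlinarith [hz.1, hz.2, hμ.1, hμ.2],
      by nlinarith [hz.1, hz.2, hμ.1, hμ.2]⟩).ne'
  have := mul_integral_sq_le_of_riccati zero_le_one hf hf' fun z hz =>
    (hasDerivAt_neg_mul_tan_mul_sub (c := 1 / 2) (hcos z hz)).hasDerivWithinAt
  have hr₀ : -(μ * tan (μ * (0 - 1 / 2))) = α := by
    rw [show μ * (0 - 1 / 2) = -(μ / 2) by ring, tan_neg, mul_neg, neg_neg, hαμ]
  have hr₁ : -(μ * tan (μ * (1 - 1 / 2))) = -α := by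
    rw [show μ * (1 - 1 / 2) = μ / 2 by ring, hαμ]
  rw [hr₀, hr₁] at this
  linarith

/-- For a real constant `α ≥ 0` and any trial function `f` on `[0,1]`
(continuously differentiable on `[0,1]`, with derivative `f'` there,
and not identically zero), the Rayleigh quotient
`(α(f(0)² + f(1)²) + ∫₀¹ f'(z)² dz) / (∫₀¹ f(z)² dz)` is bounded below by
`((-α + √(α² + 8π²α)) / (4π))²`. -/
theorem rayleigh_quotient_lower_bound
    (α : ℝ) (hα : 0 ≤ α)
    (f f' : ℝ → ℝ)
    (hderiv : ∀ z ∈ Icc (0 : ℝ) 1, HasDerivWithinAt f (f' z) (Icc (0 : ℝ) 1) z)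
    (hf' : ContinuousOn f' (Icc (0 : ℝ) 1))
    (hne : ∃ z ∈ Icc (0 : ℝ) 1, f z ≠ 0) :
    ((-α + Real.sqrt (α ^ 2 + 8 * π ^ 2 * α)) / (4 * π)) ^ 2 ≤
      (α * (f 0 ^ 2 + f 1 ^ 2) + ∫ z in (0 : ℝ)..1, (f' z) ^ 2) /
        ∫ z in (0 : ℝ)..1, (f z) ^ 2 := by
  obtain ⟨μ, hμ, hαμ⟩ := exists_mul_tan_half_eq hα
  have hfc : ContinuousOn f (Icc (0 : ℝ) 1) := fun z hz => (hderiv z hz).continuousWithinAt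
  have hpos : 0 < ∫ z in (0 : ℝ)..1, f z ^ 2 :=
    intervalIntegral.integral_pos zero_lt_one (hfc.pow 2) (fun _ _ => sq_nonneg _)
      (hne.imp fun _ ⟨hz, hfz⟩ => ⟨hz, by positivity⟩)
  have hroot : π * α ≤ 2 * π * μ ^ 2 + α * μ := by
    have := mul_le_mul_of_nonneg_left
      (sub_two_mul_mul_tan_le (x := μ / 2) (by linarith [hμ.1]) (by linarith [hμ.2])) hμ.1
    nlinarith [hμ.1, pi_pos]
  rw [le_div_iff₀ hpos]
  calc _ ≤ μ ^ 2 * ∫ z in (0 : ℝ)..1, f z ^ 2 :=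
        mul_le_mul_of_nonneg_right (sq_quadratic_root_le_sq pi_pos hα hμ.1 hroot) hpos.le
    _ ≤ _ := sq_mul_integral_sq_le_of_mul_tan_half_eq hμ hαμ hderiv hf'
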